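/- arXiv:2309.06754 — 3 statements merged into one kernel-verified Lean document; each statement's English description precedes it below -/
import Mathlib

section
/- If V is a K[G]-submodule of a left K[G]-module N and V is free of finite rank as a K[G]-module, then V is a direct summand of N as a K[G]-module. -/
/-!
For finite `G`, `K[G]`-linear maps `M → K[G]` correspond to `K`-linear maps `M → K`:
compose with the coefficient at `1`, and conversely send `ψ` to `m ↦ ∑ g, ψ (g⁻¹ • m) • g`.
Extending a `K[G]`-linear map into `K[G]` therefore reduces to extending a `K`-linear functional,
so `K[G]` is self-injective whenever `K` is. A finite free `K[G]`-module is then injective, and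
the inclusion of `V` into `N` splits.
-/

namespace MonoidAlgebra

section

variable {K G : Type*} [CommRing K] [Group G]

variable (K G) in
noncomputable def coeffOne : MonoidAlgebra K G →ₗ[K] K :=
  Finsupp.lapply 1 ∘ₗ (coeffLinearEquiv K).toLinearMap

@[simp] lemma coeffOne_apply (x : MonoidAlgebra K G) : coeffOne K G x = x.coeff 1 := rfl

lemma single_smul_single_smul {M : Type*} [AddCommGroup M] [Module K M]
    [Module (MonoidAlgebra K G) M] [IsScalarTower K (MonoidAlgebra K G) M]
    (g h : G) (r : K) (m : M) :
    single g (1 : K) • single h r • m = r • single (g * h) (1 : K) • m := by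
  rw [← mul_smul, single_mul_single, one_mul, ← smul_assoc, smul_single', mul_one]

end

variable {K G M N : Type*} [CommRing K] [Group G] [Fintype G]
  [AddCommGroup M] [Module K M] [Module (MonoidAlgebra K G) M]
  [IsScalarTower K (MonoidAlgebra K G) M]
  [AddCommGroup N] [Module K N] [Module (MonoidAlgebra K G) N]
  [IsScalarTower K (MonoidAlgebra K G) N]

noncomputable def coindFunctional (ψ : M →ₗ[K] K) :
    M →ₗ[MonoidAlgebra K G] MonoidAlgebra K G where
  toFun m := ofCoeff (Finsupp.equivFunOnFinite.symm fun g ↦ ψ (single g⁻¹ (1 : K) • m))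
  map_add' m m' := by
    apply coeff_injective; ext g; simp
  map_smul' a m := by
    rw [RingHom.id_apply]
    induction a using MonoidAlgebra.induction_linear with
    | zero => apply coeff_injective; ext g; simp
    | add a b ha hb =>
      rw [add_smul, add_smul, ← ha, ← hb]; apply coeff_injective; ext g; simp
    | single h r =>
      apply coeff_injective; ext g
      simp [single_smul_single_smul]

@[simp] lemma coeff_coindFunctional_apply (ψ : M →ₗ[K] K) (m : M) (g : G) :
    (coindFunctional ψ m).coeff g = ψ (single g⁻¹ (1 : K) • m) := rfl

lemma coindFunctional_comp (ψ : N →ₗ[K] K) (f : M →ₗ[MonoidAlgebra K G] N) :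
    coindFunctional (ψ ∘ₗ f.restrictScalars K) = coindFunctional ψ ∘ₗ f := by
  ext m; simp

lemma coindFunctional_coeffOne_comp (φ : M →ₗ[MonoidAlgebra K G] MonoidAlgebra K G) :
    coindFunctional (coeffOne K G ∘ₗ φ.restrictScalars K) = φ := by
  ext m; simp

theorem exists_extend [Module.Injective K K]
    {p : Submodule (MonoidAlgebra K G) N} (f : p →ₗ[MonoidAlgebra K G] MonoidAlgebra K G) :
    ∃ g : N →ₗ[MonoidAlgebra K G] MonoidAlgebra K G, g ∘ₗ p.subtype = f := by
  obtain ⟨ψ, hψ⟩ := Module.Injective.extension_property K K p N (p.subtype.restrictScalars K)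
    p.injective_subtype (coeffOne K G ∘ₗ f.restrictScalars K)
  refine ⟨coindFunctional ψ, ?_⟩
  rw [← coindFunctional_comp, hψ, coindFunctional_coeffOne_comp]

theorem injective_self [Module.Injective K K] :
    Module.Injective (MonoidAlgebra K G) (MonoidAlgebra K G) :=
  Module.Baer.injective fun I f ↦ by
    obtain ⟨g, hg⟩ := exists_extend f
    exact ⟨g, fun x hx ↦ LinearMap.congr_fun hg ⟨x, hx⟩⟩

end MonoidAlgebra

theorem Module.Injective.of_free_of_finite {R M : Type*} [Ring R] [Module.Injective R R]
    [AddCommGroup M] [Module R M] [Module.Free R M] [Module.Finite R M] :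
    Module.Injective R M :=
  let e := (Module.Free.chooseBasis R M).equivFun
  ((Module.Baer.of_injective inferInstance).of_equiv e.symm).injective

theorem Submodule.exists_isCompl_of_injective {R M : Type*} [Ring R] [AddCommGroup M] [Module R M]
    (p : Submodule R M) [Module.Injective R p] : ∃ q : Submodule R M, IsCompl p q := by
  obtain ⟨f, hf⟩ := Module.Injective.out p.subtype p.injective_subtype .id
  exact ⟨LinearMap.ker f, LinearMap.isCompl_of_proj hf⟩

/-- Let `G` be a finite group, `K` a field, `N` a left `K[G]`-module and `V` a
`K[G]`-submodule of `N`.  If `V` is free of finite rank as a `K[G]`-module then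
`V` is a direct summand of `N`. -/
theorem stmt3 (K : Type) [Field K] (G : Type) [Group G] [Fintype G]
    (N : Type) [AddCommGroup N] [Module (MonoidAlgebra K G) N]
    (V : Submodule (MonoidAlgebra K G) N)
    (hfree : Module.Free (MonoidAlgebra K G) V)
    (hfin : Module.Finite (MonoidAlgebra K G) V) :
    ∃ W : Submodule (MonoidAlgebra K G) N, IsCompl V W := by
  have := Module.injective_of_isSemisimpleRing K K
  have := MonoidAlgebra.injective_self (K := K) (G := G)
  have := Module.Injective.of_free_of_finite (R := MonoidAlgebra K G) (M := V)
  exact V.exists_isCompl_of_injective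
end

section
/- Let ω be a primitive o-th root of unity in a field K, β_i = ω^{i(i−1)/2}, M a K-vector space, m_0,…,m_{o−1} ∈ M, and n_j = β_j⁻¹ m_j. Define b(x) = Σ_{i=0}^{2o−2} β_i x^i ∈ K[x] and n(x) = Σ_{j=0}^{o−1} n_{o−1−j} x^j ∈ M[x], and let r(x) = b(x)·n(x) = Σ_i r_i x^i. Then for each 0 ≤ i ≤ o−1, the Fourier coefficient Σ_{j=0}^{o−1} ω^{ij} m_j equals β_i⁻¹ r_{o−1+i}. -/
/-- `β_i = ω^{t_i}` with `t_i = i(i−1)/2` (Bluestein's chirp). -/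
noncomputable def blu {K : Type} [Field K] (ω : K) (i : ℕ) : K :=
  ω ^ (i * (i - 1) / 2)

/-- coefficients of `b(x) = ∑_{i=0}^{2o−2} β_i x^i ∈ K[x]` (zero beyond degree `2o−2`). -/
noncomputable def bluB {K : Type} [Field K] (o : ℕ) (ω : K) (p : ℕ) : K :=
  if p ≤ 2 * o - 2 then blu ω p else 0

/-- coefficients of `n(x) = ∑_{j=0}^{o−1} n_{o−1−j} x^j ∈ M[x]`, where
`n_j = β_j⁻¹ • m_j` (zero beyond degree `o−1`). -/
noncomputable def bluN {K : Type} [Field K] {M : Type} [AddCommGroup M] [Module K M]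
    (o : ℕ) (ω : K) (m : ℕ → M) (q : ℕ) : M :=
  if q ≤ o - 1 then (blu ω (o - 1 - q))⁻¹ • m (o - 1 - q) else 0

/-- coefficients of the product `r(x) = b(x) · n(x) ∈ M[x]` (convolution). -/
noncomputable def bluR {K : Type} [Field K] {M : Type} [AddCommGroup M] [Module K M]
    (o : ℕ) (ω : K) (m : ℕ → M) (k : ℕ) : M :=
  ∑ p ∈ Finset.range (k + 1), bluB o ω p • bluN o ω m (k - p)

lemma tri_add (i j : ℕ) : (i + j) * (i + j - 1) / 2 = i * (i - 1) / 2 + j * (j - 1) / 2 + i * j := by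
  have h : ∀ n : ℕ, 2 * (n * (n - 1) / 2) = n * (n - 1) := fun n =>
    Nat.mul_div_cancel' (Nat.even_mul_pred_self n).two_dvd
  apply Nat.eq_of_mul_eq_mul_left (show 0 < 2 by norm_num)
  rw [Nat.mul_add, Nat.mul_add, h, h, h]
  rcases i with _ | i
  · simp
  rcases j with _ | j
  · simp
  simp only [Nat.add_succ_sub_one, Nat.succ_sub_one]
  ring_nf

lemma blu_add {K : Type} [Field K] (ω : K) (i j : ℕ) :
    blu ω (i + j) = blu ω i * blu ω j * ω ^ (i * j) := by
  simp [blu, tri_add, pow_add]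

/-- Bluestein's algorithm computes the Fourier transform: let `ω` be a primitive
`o`-th root of unity in a field `K`, `β_i = ω^{i(i−1)/2}`, `M` a `K`-vector
space, `m_0, …, m_{o−1} ∈ M`, `n_j = β_j⁻¹ m_j`,
`b(x) = ∑_{i=0}^{2o−2} β_i x^i`, `n(x) = ∑_{j=0}^{o−1} n_{o−1−j} x^j` and
`r(x) = b(x) n(x) = ∑_i r_i x^i`.  Then for each `0 ≤ i ≤ o − 1`,
`∑_{j=0}^{o−1} ω^{ij} m_j = β_i⁻¹ r_{o−1+i}`. -/
theorem stmt13 (K : Type) [Field K] (M : Type) [AddCommGroup M] [Module K M]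
    (o : ℕ) (ho : 2 ≤ o) (ω : K) (hω : IsPrimitiveRoot ω o) (m : ℕ → M) :
    ∀ i < o,
      ∑ j ∈ Finset.range o, ω ^ (i * j) • m j
        = (blu ω i)⁻¹ • bluR o ω m (o - 1 + i) := by
  intro i hi
  have hω0 : ω ≠ 0 := hω.ne_zero (by omega)
  have hblu : ∀ k, blu ω k ≠ 0 := fun k => pow_ne_zero _ hω0
  have hoi : o - 1 + i + 1 = i + o := by omega
  unfold bluR
  rw [hoi, Finset.sum_range_add]
  have hz : ∑ p ∈ Finset.range i, bluB o ω p • bluN o ω m (o - 1 + i - p) = 0 := by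
    refine Finset.sum_eq_zero fun p hp => ?_
    have hp' : p < i := Finset.mem_range.mp hp
    have hn : ¬ (o - 1 + i - p ≤ o - 1) := by omega
    rw [bluN, if_neg hn, smul_zero]
  rw [hz, zero_add, Finset.smul_sum]
  refine Finset.sum_congr rfl fun j hj => ?_
  have hj' : j < o := Finset.mem_range.mp hj
  have h1 : i + j ≤ 2 * o - 2 := by omega
  have h2 : o - 1 + i - (i + j) = o - 1 - j := by omega
  have h3 : o - 1 - j ≤ o - 1 := by omega
  have h4 : o - 1 - (o - 1 - j) = j := by omega
  simp only [bluB, bluN, h2, h4, if_pos h1, if_pos h3, smul_smul]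
  congr 1
  rw [blu_add]
  field_simp [hblu i, hblu j]
end

section
/- In the basic decoding setting, the space P of denominators equals L(E₀ − Supp(ε)) when the number of errors satisfies deg(Supp(ε)) ≤ N − 1 − deg(E) − deg(E₀); moreover if additionally deg(Supp(ε)) ≤ deg(E₀) − g_Y then P is nonzero. Consequently the basic decoding algorithm corrects up to (N − deg(E) − 1 − g_Y)/2 errors. -/
/-- Basic decoding of geometric codes.  `Y` is a smooth projective absolutely
integral curve of genus `g` over a finite field `K`; `Q₁, …, Q_N` are distinct
`K`-rational points; `F` is the `K`-algebra of functions on `Y` regular at the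
`Qᵢ` and `ev : F → K^N` is the evaluation map at the `Qᵢ` (an algebra
homomorphism).  `LE = L(E)`, `LE0 = L(E₀)`, `LE1 = L(E₁)` are the Riemann–Roch
spaces of divisors `E, E₀, E₁ = E + E₀` disjoint from `Q = ΣQᵢ` with
`2g − 1 ≤ deg E ≤ N − 1` and `deg E₀ ≥ g`; these satisfy
`L(E₀) · L(E) ⊆ L(E₁)` (`hmul`), a nonzero function of `L(E)` (resp. `L(E₁)`)
has at most `deg E` (resp. `deg E₁ = deg E + deg E₀`) zeros among the `Qᵢ`
(`hzE`, `hzE1`), and by Riemann–Roch for any set `S` of at most `deg E₀ − g`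
of the `Qᵢ` there is a nonzero function of `L(E₀)` vanishing on `S` (`hRR`).
A received word `r = ev f + ε` with `f ∈ L(E)` and error vector `ε` supported
on `S = Supp ε` is given; `P` is the set of denominators
`{a₀ ∈ L(E₀) : ∃ a₁ ∈ L(E₁), a₀ · r = ev a₁ pointwise}`.  Then:
(1) if `#S ≤ N − 1 − deg E − deg E₀` then `P = L(E₀ − Supp ε)`, i.e. the set of
`a₀ ∈ L(E₀)` vanishing on `S`;
(2) if moreover `#S ≤ deg E₀ − g` then `P` contains a nonzero element;
(3) consequently basic decoding corrects up to `(N − deg E − 1 − g)/2` errors: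
if `2 #S ≤ N − deg E − 1 − g` then any `f' ∈ L(E)` whose evaluation differs
from `r` in at most `(N − deg E − 1 − g)/2` positions satisfies
`ev f' = ev f`. -/
theorem stmt19 (K : Type) [Field K] [Fintype K] [DecidableEq K]
    (F : Type) [CommRing F] [Algebra K F]
    (N : ℕ) (ev : F →ₐ[K] (Fin N → K))
    (g : ℕ) (degE degE0 : ℤ)
    (LE LE0 LE1 : Submodule K F)
    (hdegE : 2 * (g : ℤ) - 1 ≤ degE ∧ degE ≤ (N : ℤ) - 1)
    (hdegE0 : (g : ℤ) ≤ degE0)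
    (hmul : ∀ a ∈ LE0, ∀ f ∈ LE, a * f ∈ LE1)
    (hzE : ∀ f ∈ LE, f ≠ 0 →
      (((Finset.univ.filter fun i => ev f i = 0).card : ℤ)) ≤ degE)
    (hzE1 : ∀ f ∈ LE1, f ≠ 0 →
      (((Finset.univ.filter fun i => ev f i = 0).card : ℤ)) ≤ degE + degE0)
    (hRR : ∀ S : Finset (Fin N), (S.card : ℤ) ≤ degE0 - g →
      ∃ a ∈ LE0, a ≠ 0 ∧ ∀ i ∈ S, ev a i = 0)
    (f : F) (hf : f ∈ LE) (ε r : Fin N → K) (hr : r = ev f + ε)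
    (S : Finset (Fin N)) (hS : S = Finset.univ.filter fun i => ε i ≠ 0) :
    ((S.card : ℤ) ≤ (N : ℤ) - 1 - degE - degE0 →
      {a₀ : F | a₀ ∈ LE0 ∧ ∃ a₁ ∈ LE1, ∀ i, ev a₀ i * r i = ev a₁ i}
        = {a₀ : F | a₀ ∈ LE0 ∧ ∀ i ∈ S, ev a₀ i = 0})
    ∧
    ((S.card : ℤ) ≤ (N : ℤ) - 1 - degE - degE0 → (S.card : ℤ) ≤ degE0 - g →
      ∃ a₀ : F, a₀ ≠ 0 ∧ a₀ ∈ LE0 ∧ ∃ a₁ ∈ LE1, ∀ i, ev a₀ i * r i = ev a₁ i)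
    ∧
    (2 * (S.card : ℤ) ≤ (N : ℤ) - degE - 1 - g →
      ∀ f' ∈ LE,
        2 * (((Finset.univ.filter fun i => ev f' i ≠ r i).card : ℤ))
            ≤ (N : ℤ) - degE - 1 - g →
        ev f' = ev f) := by

  -- key: ε vanishes off S
  have hεS : ∀ i, i ∉ S → ε i = 0 := by
    intro i hi
    subst hS
    simp only [Finset.mem_filter, Finset.mem_univ, true_and, not_not] at hi
    exact hi
  have hSmem : ∀ i ∈ S, ε i ≠ 0 := by
    intro i hi
    subst hS
    simpa using hi
  -- counting lemma
  have hcount : ∀ (T : Finset (Fin N)) (h : F),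
      (∀ i, i ∉ T → ev h i = 0) →
      ((N : ℤ) - T.card ≤ ((Finset.univ.filter fun i => ev h i = 0).card : ℤ)) := by
    intro T h hvan
    have hsub : Tᶜ ⊆ Finset.univ.filter fun i => ev h i = 0 := by
      intro i hi
      simp only [Finset.mem_compl] at hi
      simp [hvan i hi]
    have := Finset.card_le_card hsub
    have hc : Tᶜ.card = N - T.card := by
      simp [Finset.card_compl]
    have hT : T.card ≤ N := by
      simpa using Finset.card_le_card (Finset.subset_univ T)
    omega
  -- the key "forward" direction of (1)
  have hfwd : (S.card : ℤ) ≤ (N : ℤ) - 1 - degE - degE0 →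
      ∀ a₀ ∈ LE0, ∀ a₁ ∈ LE1, (∀ i, ev a₀ i * r i = ev a₁ i) →
      ∀ i ∈ S, ev a₀ i = 0 := by
    intro hcard a₀ ha₀ a₁ ha₁ heq
    have hmem : a₀ * f - a₁ ∈ LE1 := sub_mem (hmul a₀ ha₀ f hf) ha₁
    have hvan : ∀ i, i ∉ S → ev (a₀ * f - a₁) i = 0 := by
      intro i hi
      have hε := hεS i hi
      have : r i = ev f i := by rw [hr]; simp [hε]
      have h2 := heq i
      rw [this] at h2
      simp [map_sub, map_mul, h2]
    have hz := hcount S _ hvan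
    have hne : a₀ * f - a₁ = 0 := by
      by_contra hne
      have := hzE1 _ hmem hne
      omega
    have ha₁eq : a₁ = a₀ * f := by
      have := sub_eq_zero.mp hne
      exact this.symm
    intro i hi
    have h2 := heq i
    rw [ha₁eq, hr] at h2
    simp only [map_mul, Pi.mul_apply, Pi.add_apply] at h2
    have : ev a₀ i * ε i = 0 := by linear_combination h2
    rcases mul_eq_zero.mp this with h | h
    · exact h
    · exact absurd h (hSmem i hi)
  -- backward direction: vanishing on S gives membership in P
  have hbwd : ∀ a₀ ∈ LE0, (∀ i ∈ S, ev a₀ i = 0) →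
      ∃ a₁ ∈ LE1, ∀ i, ev a₀ i * r i = ev a₁ i := by
    intro a₀ ha₀ hvan
    refine ⟨a₀ * f, hmul a₀ ha₀ f hf, fun i => ?_⟩
    by_cases hi : i ∈ S
    · simp [map_mul, hvan i hi]
    · have := hεS i hi
      rw [hr]
      simp [map_mul, this]
  refine ⟨?_, ?_, ?_⟩
  · intro hcard
    ext a₀
    simp only [Set.mem_setOf_eq]
    constructor
    · rintro ⟨ha₀, a₁, ha₁, heq⟩
      exact ⟨ha₀, hfwd hcard a₀ ha₀ a₁ ha₁ heq⟩
    · rintro ⟨ha₀, hvan⟩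
      exact ⟨ha₀, hbwd a₀ ha₀ hvan⟩
  · intro _ hcard2
    obtain ⟨a₀, ha₀, hne, hvan⟩ := hRR S hcard2
    exact ⟨a₀, hne, ha₀, hbwd a₀ ha₀ hvan⟩
  · intro hcard f' hf' hcard'
    set S' := Finset.univ.filter fun i => ev f' i ≠ r i with hS'
    have hvan : ∀ i, i ∉ S ∪ S' → ev (f' - f) i = 0 := by
      intro i hi
      simp only [Finset.mem_union, not_or] at hi
      have h1 : ev f' i = r i := by
        have := hi.2
        simp only [hS', Finset.mem_filter, Finset.mem_univ, true_and, not_not] at this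
        exact this
      have h2 : ε i = 0 := hεS i hi.1
      have : r i = ev f i := by rw [hr]; simp [h2]
      simp [map_sub, h1, this]
    have hz := hcount (S ∪ S') _ hvan
    have hun : ((S ∪ S').card : ℤ) ≤ (S.card : ℤ) + S'.card := by
      exact_mod_cast Finset.card_union_le S S'
    have hne : f' - f = 0 := by
      by_contra hne
      have := hzE (f' - f) (sub_mem hf' hf) hne
      have hg : (0 : ℤ) ≤ (g : ℤ) := Int.natCast_nonneg g
      omega
    rw [sub_eq_zero.mp hne]
end
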